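/- Let B ⊆ ℝ^(n+1) be compact, strictly convex, with non-empty interior, v a unit vector, and S = ∂B. The median M_v := { (x⁺+x⁻)/2 : x⁺ ∈ D_v^+, x⁻ ∈ D_v^-, p_v(x⁺)=p_v(x⁻) } is compact, and the restriction of p_v to M_v is a homeomorphism onto the disc p_v(B); in particular M_v is homeomorphic to D^n. -/

import Mathlib

open Metric Set
open scoped RealInnerProductSpace

/-- Orthogonal projection of `ℝ^{n+1}` onto the hyperplane orthogonal to `v`. -/
noncomputable def pv {n : ℕ} (v : EuclideanSpace ℝ (Fin (n + 1))) :
    EuclideanSpace ℝ (Fin (n + 1)) →L[ℝ] ↥((ℝ ∙ v)ᗮ) :=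
  Submodule.orthogonalProjectionOnto (ℝ ∙ v)ᗮ

/-- `B` is strictly convex: every open segment between two distinct points of `B`
lies in the interior of `B`. -/
def StrictlyConvexSet {V : Type*} [AddCommGroup V] [Module ℝ V] [TopologicalSpace V]
    (B : Set V) : Prop :=
  ∀ x ∈ B, ∀ y ∈ B, x ≠ y → openSegment ℝ x y ⊆ interior B

/-- Points of `B` projecting to the boundary of `p_v(B)`. -/
def D0 {n : ℕ} (B : Set (EuclideanSpace ℝ (Fin (n + 1)))) (v : EuclideanSpace ℝ (Fin (n + 1))) :
    Set (EuclideanSpace ℝ (Fin (n + 1))) :=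
  {x ∈ B | pv v x ∈ frontier (pv v '' B)}

/-- Upper region of `S = ∂B`: points over the interior of `p_v(B)` maximizing `x·v` on the fiber. -/
def Uplus {n : ℕ} (B : Set (EuclideanSpace ℝ (Fin (n + 1)))) (v : EuclideanSpace ℝ (Fin (n + 1))) :
    Set (EuclideanSpace ℝ (Fin (n + 1))) :=
  {x | x ∈ frontier B ∧ pv v x ∈ interior (pv v '' B) ∧
    ∀ y ∈ B, pv v y = pv v x → ⟪y, v⟫ ≤ ⟪x, v⟫}

/-- Lower region of `S = ∂B`: points over the interior of `p_v(B)` minimizing `x·v` on the fiber. -/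
def Uminus {n : ℕ} (B : Set (EuclideanSpace ℝ (Fin (n + 1)))) (v : EuclideanSpace ℝ (Fin (n + 1))) :
    Set (EuclideanSpace ℝ (Fin (n + 1))) :=
  {x | x ∈ frontier B ∧ pv v x ∈ interior (pv v '' B) ∧
    ∀ y ∈ B, pv v y = pv v x → ⟪x, v⟫ ≤ ⟪y, v⟫}

def Dplus {n : ℕ} (B : Set (EuclideanSpace ℝ (Fin (n + 1)))) (v : EuclideanSpace ℝ (Fin (n + 1))) :
    Set (EuclideanSpace ℝ (Fin (n + 1))) := D0 B v ∪ Uplus B v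

def Dminus {n : ℕ} (B : Set (EuclideanSpace ℝ (Fin (n + 1)))) (v : EuclideanSpace ℝ (Fin (n + 1))) :
    Set (EuclideanSpace ℝ (Fin (n + 1))) := D0 B v ∪ Uminus B v

/-- The median of `S` in direction `v`: midpoints of fiber pairs. -/
def median {n : ℕ} (B : Set (EuclideanSpace ℝ (Fin (n + 1)))) (v : EuclideanSpace ℝ (Fin (n + 1))) :
    Set (EuclideanSpace ℝ (Fin (n + 1))) :=
  {z | ∃ xp ∈ Dplus B v, ∃ xm ∈ Dminus B v, pv v xp = pv v xm ∧ z = midpoint ℝ xp xm}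

/-!
Write `K = p_v(B)`. Over a point of `∂K` the fibre of `B` is a single point: otherwise its
midpoint would lie in `interior B` and project into `interior K`. Over a point of `interior K`,
`D_v^±` meets the fibre exactly in the maximiser (minimiser) of `⟪·, v⟫`. Hence `p_v` maps each
of `D_v^±`, and therefore `M_v`, bijectively onto `K`. The sets `D_v^±` are closed because
fibrewise maxima pass to limits over `interior K`: nearby fibres are translates of one another
inside the open set `interior B`, and the interior points of a fibre are dense in it. So `M_v` is
compact, `p_v : M_v → K` is a homeomorphism, and `K`, a convex body in the `n`-dimensional space
`vᗮ`, is a closed `n`-disc.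
-/

open Filter Topology

section General

variable {E F : Type*} [AddCommGroup E] [Module ℝ E] [AddCommGroup F] [Module ℝ F]

theorem StrictlyConvexSet.strictConvex [TopologicalSpace E] {B : Set E}
    (hB : StrictlyConvexSet B) : StrictConvex ℝ B :=
  strictConvex_iff_openSegment_subset.2 fun x hx y hy hne => hB x hx y hy hne

theorem LinearMap.map_eq_of_mem_openSegment (f : E →ₗ[ℝ] F) {x y z : E}
    (hz : z ∈ openSegment ℝ x y) (hxy : f x = f y) : f z = f x := by
  have : f z ∈ openSegment ℝ (f x) (f y) := by
    rw [← f.coe_toAffineMap, ← image_openSegment]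
    exact mem_image_of_mem _ hz
  rwa [← hxy, openSegment_same] at this

theorem StrictConvex.eq_of_map_eq_of_notMem_interior [TopologicalSpace E]
    [TopologicalSpace F] {B : Set E} (hB : StrictConvex ℝ B) {f : E →ₗ[ℝ] F}
    (hf : IsOpenMap f) {x y : E} (hx : x ∈ B) (hy : y ∈ B) (hxy : f x = f y)
    (hint : f x ∉ interior (f '' B)) : x = y := by
  by_contra hne
  have hmid := midpoint_mem_openSegment (𝕜 := ℝ) x y
  refine hint ?_
  rw [← f.map_eq_of_mem_openSegment hmid hxy]
  exact hf.image_interior_subset B (mem_image_of_mem f (hB.openSegment_subset hx hy hne hmid))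

variable [TopologicalSpace E] [IsTopologicalAddGroup E] [ContinuousSMul ℝ E]
  [TopologicalSpace F] [IsTopologicalAddGroup F] [ContinuousSMul ℝ F]

theorem Convex.interior_image_subset_image_interior {B : Set E} (hB : Convex ℝ B)
    (hBint : (interior B).Nonempty) (f : E →ₗ[ℝ] F) :
    interior (f '' B) ⊆ f '' interior B := by
  intro p hp
  obtain ⟨b, hb⟩ := hBint
  have h := AffineMap.lineMap_apply_one (k := ℝ) (f b) p
  obtain ⟨t, ht1, ⟨c, hc, hct⟩⟩ := AffineMap.lineMap_continuous.tendsto' _ _ h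
    |>.eventually_mem (mem_interior_iff_mem_nhds.1 hp) |>.exists_gt
  have hpseg : p ∈ f '' openSegment ℝ b c := by
    rw [← f.coe_toAffineMap, image_openSegment, f.coe_toAffineMap, hct]
    nth_rw 1 [← AffineMap.lineMap_apply_zero (k := ℝ) (f b) p, ← image_openSegment]
    exact ⟨1, Ioo_subset_openSegment ⟨zero_lt_one, ht1⟩, h⟩
  exact image_mono (hB.openSegment_interior_self_subset_interior hb hc) hpseg

end General

def fiberMidpoints {E F : Type*} [AddCommGroup E] [Module ℝ E] (f : E → F) (S T : Set E) :
    Set E :=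
  {z | ∃ x ∈ S, ∃ y ∈ T, f x = f y ∧ z = midpoint ℝ x y}

section FiberMidpoints

variable {E F : Type*} [AddCommGroup E] [Module ℝ E]

theorem Set.BijOn.fiberMidpoints [AddCommGroup F] [Module ℝ F] {f : E →ₗ[ℝ] F}
    {S T : Set E} {K : Set F} (hS : BijOn f S K) (hT : BijOn f T K) :
    BijOn f (fiberMidpoints f S T) K := by
  have map_mid : ∀ x y, f x = f y → f (midpoint ℝ x y) = f x := fun x y =>
    f.map_eq_of_mem_openSegment (midpoint_mem_openSegment x y)
  refine ⟨?_, ?_, ?_⟩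
  · rintro _ ⟨x, hx, y, -, hxy, rfl⟩
    rw [map_mid x y hxy]
    exact hS.mapsTo hx
  · rintro _ ⟨x, hx, y, hy, hxy, rfl⟩ _ ⟨x', hx', y', hy', hxy', rfl⟩ h
    rw [map_mid x y hxy, map_mid x' y' hxy'] at h
    rw [hS.injOn hx hx' h, hT.injOn hy hy' (by rw [← hxy, ← hxy', h])]
  · intro p hp
    obtain ⟨x, hx, rfl⟩ := hS.surjOn hp
    obtain ⟨y, hy, hyx⟩ := hT.surjOn hp
    exact ⟨midpoint ℝ x y, ⟨x, hx, y, hy, hyx.symm, rfl⟩, map_mid x y hyx.symm⟩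

theorem IsCompact.fiberMidpoints [TopologicalSpace E] [IsTopologicalAddGroup E]
    [ContinuousSMul ℝ E] [TopologicalSpace F] [T2Space F] {f : E → F} (hf : Continuous f)
    {S T : Set E} (hS : IsCompact S) (hT : IsCompact T) :
    IsCompact (fiberMidpoints f S T) := by
  have hpairs : IsCompact (S ×ˢ T ∩ {p | f p.1 = f p.2}) :=
    (hS.prod hT).inter_right (isClosed_eq (hf.comp continuous_fst) (hf.comp continuous_snd))
  have hmid : Continuous fun p : E × E => midpoint ℝ p.1 p.2 := by
    simp only [midpoint_eq_smul_add]
    fun_prop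
  convert hpairs.image hmid using 1
  ext z
  constructor
  · rintro ⟨x, hx, y, hy, hxy, rfl⟩
    exact ⟨(x, y), ⟨⟨hx, hy⟩, hxy⟩, rfl⟩
  · rintro ⟨⟨x, y⟩, ⟨⟨hx, hy⟩, hxy⟩, rfl⟩
    exact ⟨x, hx, y, hy, hxy, rfl⟩

end FiberMidpoints

theorem Convex.nonempty_homeomorph_closedBall {W : Type*} [NormedAddCommGroup W]
    [NormedSpace ℝ W] [FiniteDimensional ℝ W] {n : ℕ} (hW : Module.finrank ℝ W = n)
    {K : Set W} (hKc : Convex ℝ K) (hK : IsCompact K) (hKint : (interior K).Nonempty) :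
    Nonempty (K ≃ₜ Metric.closedBall (0 : EuclideanSpace ℝ (Fin n)) 1) := by
  let L : W ≃L[ℝ] EuclideanSpace ℝ (Fin n) :=
    ContinuousLinearEquiv.ofFinrankEq (by rw [hW, finrank_euclideanSpace_fin])
  have hLc : Convex ℝ (L '' K) := hKc.linear_image L.toLinearEquiv.toLinearMap
  have hLK : IsCompact (L '' K) := hK.image L.continuous
  have hLint : (interior (L '' K)).Nonempty := by
    rw [← L.coe_toHomeomorph, ← L.toHomeomorph.image_interior]
    exact hKint.image _
  obtain ⟨g, -, hg, -⟩ :=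
    exists_homeomorph_image_interior_closure_frontier_eq_unitBall hLc hLint hLK.isBounded
  rw [hLK.isClosed.closure_eq] at hg
  exact ⟨(L.toHomeomorph.image K).trans ((g.image _).trans (Homeomorph.setCongr hg))⟩

section Projection

variable {n : ℕ} {B : Set (EuclideanSpace ℝ (Fin (n + 1)))}
  {v w x y : EuclideanSpace ℝ (Fin (n + 1))}

@[simp]
theorem pv_coe (p : ↥(ℝ ∙ v)ᗮ) : pv v p = p :=
  Submodule.orthogonalProjectionOnto_mem_subspace_eq_self p

theorem pv_surjective : Function.Surjective (pv v) :=
  fun p => ⟨p, pv_coe p⟩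

theorem isOpenMap_pv : IsOpenMap (pv v) :=
  (pv v).isOpenMap pv_surjective

theorem pv_eq_zero_of_mem_span (hw : w ∈ ℝ ∙ v) : pv v w = 0 :=
  Submodule.orthogonalProjectionOnto_orthogonal_apply_eq_zero hw

theorem finrank_orthogonal_span (hv : v ≠ 0) : Module.finrank ℝ (ℝ ∙ v)ᗮ = n := by
  have : Fact (Module.finrank ℝ (EuclideanSpace ℝ (Fin (n + 1))) = n + 1) :=
    ⟨finrank_euclideanSpace_fin⟩
  exact Submodule.finrank_orthogonal_span_singleton hv

theorem eq_of_pv_eq_of_inner_eq (hw : w ∈ ℝ ∙ v) (hw0 : w ≠ 0) (hpv : pv v x = pv v y)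
    (hinner : ⟪x, w⟫ = ⟪y, w⟫) : x = y := by
  have h₁ : x - y ∈ (ℝ ∙ v)ᗮᗮ := by
    rw [← Submodule.orthogonalProjectionOnto_eq_zero_iff]
    exact (map_sub (pv v) x y).trans (sub_eq_zero.2 hpv)
  have h₂ : x - y ∈ (ℝ ∙ v)ᗮ := by
    obtain ⟨c, rfl⟩ := Submodule.mem_span_singleton.1 hw
    have hc : c ≠ 0 := by rintro rfl; simp at hw0
    rw [Submodule.mem_orthogonal_singleton_iff_inner_right, real_inner_comm, inner_sub_left]
    simpa [real_inner_smul_right, hc, sub_eq_zero] using hinner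
  rw [← sub_eq_zero, ← inner_self_eq_zero (𝕜 := ℝ)]
  exact Submodule.inner_left_of_mem_orthogonal h₂ h₁

theorem notMem_interior_of_isMaxOn (hw : w ∈ ℝ ∙ v) (hw0 : w ≠ 0)
    (hmax : IsMaxOn (fun y => ⟪y, w⟫) (B ∩ pv v ⁻¹' {pv v x}) x) : x ∉ interior B := by
  intro hx
  have h : Tendsto (fun t : ℝ => x + t • w) (𝓝 0) (𝓝 x) :=
    (continuous_const.add (continuous_id.smul continuous_const)).tendsto' _ _ (by simp)
  obtain ⟨t, ht, htB⟩ := (h.eventually_mem (mem_interior_iff_mem_nhds.1 hx)).exists_gt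
  have hle : ⟪x + t • w, w⟫ ≤ ⟪x, w⟫ :=
    hmax ⟨htB, by simp [pv_eq_zero_of_mem_span hw]⟩
  rw [inner_add_left, real_inner_smul_left] at hle
  nlinarith [real_inner_self_pos.2 hw0]

end Projection

-- `D_v^+ = upperSection B v v` and `D_v^- = upperSection B v (-v)`; the condition `x ∈ ∂B` of
-- `U_v^±` is omitted because maximality implies it (`notMem_interior_of_isMaxOn`).
def upperSection {n : ℕ} (B : Set (EuclideanSpace ℝ (Fin (n + 1))))
    (v w : EuclideanSpace ℝ (Fin (n + 1))) : Set (EuclideanSpace ℝ (Fin (n + 1))) :=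
  {x ∈ B | pv v x ∈ interior (pv v '' B) →
    IsMaxOn (fun y => ⟪y, w⟫) (B ∩ pv v ⁻¹' {pv v x}) x}

section UpperSection

variable {n : ℕ} {B : Set (EuclideanSpace ℝ (Fin (n + 1)))}
  {v w x y : EuclideanSpace ℝ (Fin (n + 1))}

theorem D0_union_eq_upperSection (hBcl : IsClosed B) (hw : w ∈ ℝ ∙ v) (hw0 : w ≠ 0) :
    D0 B v ∪ {x | x ∈ frontier B ∧ pv v x ∈ interior (pv v '' B) ∧
      IsMaxOn (fun y => ⟪y, w⟫) (B ∩ pv v ⁻¹' {pv v x}) x} = upperSection B v w := by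
  ext x
  constructor
  · rintro (⟨hxB, hfr⟩ | ⟨hfr, -, hmax⟩)
    · exact ⟨hxB, fun hint => (hfr.2 hint).elim⟩
    · exact ⟨hBcl.frontier_subset hfr, fun _ => hmax⟩
  · rintro ⟨hxB, hmax⟩
    by_cases hint : pv v x ∈ interior (pv v '' B)
    · exact .inr ⟨⟨subset_closure hxB, notMem_interior_of_isMaxOn hw hw0 (hmax hint)⟩,
        hint, hmax hint⟩
    · exact .inl ⟨hxB, subset_closure (mem_image_of_mem _ hxB), hint⟩

theorem Dplus_eq_upperSection (hBcl : IsClosed B) (hv : v ≠ 0) :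
    Dplus B v = upperSection B v v := by
  rw [← D0_union_eq_upperSection hBcl (Submodule.mem_span_singleton_self v) hv]
  simp [Dplus, Uplus, isMaxOn_iff]

theorem Dminus_eq_upperSection (hBcl : IsClosed B) (hv : v ≠ 0) :
    Dminus B v = upperSection B v (-v) := by
  rw [← D0_union_eq_upperSection hBcl (neg_mem (Submodule.mem_span_singleton_self v))
    (neg_ne_zero.2 hv)]
  simp [Dminus, Uminus, isMaxOn_iff]

theorem inner_le_of_tendsto_isMaxOn {ι : Type*} {l : Filter ι} [l.NeBot]
    {u : ι → EuclideanSpace ℝ (Fin (n + 1))} (hw : w ∈ ℝ ∙ v)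
    (hu : ∀ᶠ i in l, IsMaxOn (fun y => ⟪y, w⟫) (B ∩ pv v ⁻¹' {pv v (u i)}) (u i))
    (hux : Tendsto u l (𝓝 x)) (hy : y ∈ interior B)
    (hyx : pv v y = pv v x) : ⟪y, w⟫ ≤ ⟪x, w⟫ := by
  -- `z i` is `y` moved onto the fibre of `u i`; eventually it lies in `interior B`.
  set z := fun i => y + (pv v (u i - x) : EuclideanSpace ℝ (Fin (n + 1)))
  have hz : Tendsto z l (𝓝 y) := by
    have hsub : Tendsto (fun i => u i - x) l (𝓝 0) := by simpa using hux.sub_const x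
    have h : Tendsto (fun i => (pv v (u i - x) : EuclideanSpace ℝ (Fin (n + 1)))) l (𝓝 0) :=
      ((continuous_subtype_val.comp (pv v).continuous).tendsto' 0 0 (by simp)).comp hsub
    simpa only [add_zero] using (tendsto_const_nhds (x := y)).add h
  have hle : ∀ᶠ i in l, ⟪y, w⟫ ≤ ⟪u i, w⟫ := by
    filter_upwards [hu, hz.eventually_mem (mem_interior_iff_mem_nhds.1 hy)] with i hmax hzB
    have hfib : pv v (z i) = pv v (u i) := by simp [z, hyx]
    have hinner : ⟪z i, w⟫ = ⟪y, w⟫ := by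
      rw [inner_add_left, Submodule.inner_left_of_mem_orthogonal hw (pv v _).2, add_zero]
    exact hinner ▸ hmax ⟨hzB, hfib⟩
  exact ge_of_tendsto (((continuous_id.inner continuous_const).tendsto x).comp hux) hle

theorem isMaxOn_of_tendsto (hBcv : Convex ℝ B) (hBint : (interior B).Nonempty)
    (hw : w ∈ ℝ ∙ v) {ι : Type*} {l : Filter ι} [l.NeBot]
    {u : ι → EuclideanSpace ℝ (Fin (n + 1))}
    (hu : ∀ᶠ i in l, IsMaxOn (fun y => ⟪y, w⟫) (B ∩ pv v ⁻¹' {pv v (u i)}) (u i))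
    (hux : Tendsto u l (𝓝 x)) (hx : pv v x ∈ interior (pv v '' B)) :
    IsMaxOn (fun y => ⟪y, w⟫) (B ∩ pv v ⁻¹' {pv v x}) x := by
  obtain ⟨c, hc, hcx⟩ :=
    hBcv.interior_image_subset_image_interior hBint (pv v).toLinearMap hx
  rintro y ⟨hy, hyx : pv v y = pv v x⟩
  have hseg : openSegment ℝ c y ⊆ {z | ⟪z, w⟫ ≤ ⟪x, w⟫} := fun z hz => by
    have hzx : pv v z = pv v x :=
      ((pv v).toLinearMap.map_eq_of_mem_openSegment hz (hcx.trans hyx.symm)).trans hcx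
    exact inner_le_of_tendsto_isMaxOn hw hu hux
      (hBcv.openSegment_interior_self_subset_interior hc hy hz) hzx
  exact closure_minimal hseg (isClosed_le (by fun_prop) continuous_const)
    (segment_subset_closure_openSegment (right_mem_segment ℝ c y))

theorem isClosed_upperSection (hBcl : IsClosed B) (hBcv : Convex ℝ B)
    (hBint : (interior B).Nonempty) (hw : w ∈ ℝ ∙ v) : IsClosed (upperSection B v w) := by
  refine isClosed_iff_clusterPt.2 fun x hx => ⟨?_, fun hint => ?_⟩
  · exact hBcl.closure_subset (closure_mono (sep_subset _ _) (mem_closure_iff_clusterPt.2 hx))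
  have hlim : Tendsto id (𝓝 x ⊓ 𝓟 (upperSection B v w)) (𝓝 x) := tendsto_inf_left tendsto_id
  have hint' : ∀ᶠ y in 𝓝 x ⊓ 𝓟 (upperSection B v w), pv v y ∈ interior (pv v '' B) :=
    ((pv v).continuous.tendsto x).comp hlim |>.eventually_mem (isOpen_interior.mem_nhds hint)
  have hmem : ∀ᶠ y in 𝓝 x ⊓ 𝓟 (upperSection B v w), y ∈ upperSection B v w :=
    mem_inf_of_right (mem_principal_self _)
  have : (𝓝 x ⊓ 𝓟 (upperSection B v w)).NeBot := hx
  refine isMaxOn_of_tendsto hBcv hBint hw ?_ hlim hint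
  filter_upwards [hint', hmem] with y hy hyS using hyS.2 hy

theorem eq_of_mem_upperSection (hBsc : StrictConvex ℝ B) (hw : w ∈ ℝ ∙ v) (hw0 : w ≠ 0)
    (hx : x ∈ upperSection B v w) (hy : y ∈ upperSection B v w) (hxy : pv v x = pv v y) :
    x = y := by
  by_cases hint : pv v x ∈ interior (pv v '' B)
  · refine eq_of_pv_eq_of_inner_eq hw hw0 hxy (le_antisymm ?_ ?_)
    · exact hy.2 (hxy ▸ hint) ⟨hx.1, hxy⟩
    · exact hx.2 hint ⟨hy.1, hxy.symm⟩
  · exact hBsc.eq_of_map_eq_of_notMem_interior (f := (pv v).toLinearMap) isOpenMap_pv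
      hx.1 hy.1 hxy hint

theorem exists_mem_upperSection (hBc : IsCompact B) {p : ↥(ℝ ∙ v)ᗮ} (hp : p ∈ pv v '' B) :
    ∃ x ∈ upperSection B v w, pv v x = p := by
  have hfib : IsCompact (B ∩ pv v ⁻¹' {p}) :=
    hBc.inter_right (isClosed_singleton.preimage (pv v).continuous)
  obtain ⟨b, hb, rfl⟩ := hp
  obtain ⟨x, ⟨hxB, hxp : pv v x = pv v b⟩, hmax⟩ :=
    hfib.exists_isMaxOn ⟨b, hb, rfl⟩ (continuous_id.inner continuous_const (𝕜 := ℝ)).continuousOn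
  exact ⟨x, ⟨hxB, fun _ => hxp ▸ hmax⟩, hxp⟩

theorem bijOn_upperSection (hBc : IsCompact B) (hBsc : StrictConvex ℝ B)
    (hw : w ∈ ℝ ∙ v) (hw0 : w ≠ 0) : BijOn (pv v) (upperSection B v w) (pv v '' B) :=
  ⟨fun _ hx => mem_image_of_mem _ hx.1,
    fun _ hx _ hy => eq_of_mem_upperSection hBsc hw hw0 hx hy,
    fun _ hp => exists_mem_upperSection hBc hp⟩

end UpperSection

theorem stmt7 (n : ℕ) (B : Set (EuclideanSpace ℝ (Fin (n + 1))))
    (hBc : IsCompact B) (hBsc : StrictlyConvexSet B) (hBint : (interior B).Nonempty)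
    (v : EuclideanSpace ℝ (Fin (n + 1))) (hv : ‖v‖ = 1) :
    IsCompact (median B v) ∧
    (∃ h : median B v ≃ₜ (pv v '' B),
      ∀ x : median B v, (h x : ↥((ℝ ∙ v)ᗮ)) = pv v (x : EuclideanSpace ℝ (Fin (n + 1)))) ∧
    Nonempty (median B v ≃ₜ (Metric.closedBall (0 : EuclideanSpace ℝ (Fin n)) 1)) := by
  have hv0 : v ≠ 0 := by rintro rfl; simp at hv
  have hBstrict : StrictConvex ℝ B := hBsc.strictConvex
  have hv_mem : v ∈ ℝ ∙ v := Submodule.mem_span_singleton_self v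
  have hmedian : median B v =
      fiberMidpoints (pv v) (upperSection B v v) (upperSection B v (-v)) := by
    rw [← Dplus_eq_upperSection hBc.isClosed hv0, ← Dminus_eq_upperSection hBc.isClosed hv0]
    rfl
  have hsection : ∀ w ∈ ℝ ∙ v, IsCompact (upperSection B v w) := fun w hw =>
    hBc.of_isClosed_subset (isClosed_upperSection hBc.isClosed hBstrict.convex hBint hw)
      (sep_subset _ _)
  have hcompact : IsCompact (median B v) := hmedian ▸
    (hsection v hv_mem).fiberMidpoints (pv v).continuous (hsection (-v) (neg_mem hv_mem))
  have hbij : BijOn (pv v) (median B v) (pv v '' B) := hmedian ▸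
    Set.BijOn.fiberMidpoints (f := (pv v).toLinearMap)
      (bijOn_upperSection hBc hBstrict hv_mem hv0)
      (bijOn_upperSection hBc hBstrict (neg_mem hv_mem) (neg_ne_zero.2 hv0))
  have : CompactSpace (median B v) := isCompact_iff_compactSpace.1 hcompact
  let e : median B v ≃ₜ pv v '' B :=
    (Continuous.restrict hbij.mapsTo (pv v).continuous).homeoOfEquivCompactToT2
      (f := hbij.equiv (pv v))
  obtain ⟨b, hb⟩ := hBint
  obtain ⟨g⟩ := (hBstrict.convex.linear_image (pv v).toLinearMap).nonempty_homeomorph_closedBall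
    (finrank_orthogonal_span hv0) (hBc.image (pv v).continuous)
    ⟨pv v b, isOpenMap_pv.image_interior_subset B (mem_image_of_mem _ hb)⟩
  exact ⟨hcompact, ⟨e, fun _ => rfl⟩, ⟨e.trans g⟩⟩
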